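/- arXiv:1804.10886 — 8 statements merged into one kernel-verified Lean document; each statement's English description precedes it below -/
import Mathlib

section
/- If there exists a span of open morphisms between two diagrams F : C → A and G : D → A, with tip H : E → A and open morphisms (Φ,σ) : H → F and (Ψ,τ) : H → G, then the set R = {(Φ(e), τ_e ∘ σ_e⁻¹, Ψ(e)) | e ∈ E} is a bisimulation between F and G. -/
open CategoryTheory

universe v u

variable {A : Type u} [Category.{v} A]

/-- A morphism of diagrams `(Φ, σ)` from `F : C ⥤ A` to `G : D ⥤ A`:
a functor `Φ : C ⥤ D` together with a natural isomorphism `σ : F ≅ Φ ⋙ G`. -/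
structure DiagMor {C D : Type v} [SmallCategory C] [SmallCategory D]
    (F : C ⥤ A) (G : D ⥤ A) : Type (max u v) where
  Φ : C ⥤ D
  σ : F ≅ Φ ⋙ G

/-- A morphism of diagrams is open iff `Φ` is surjective on objects and a fibration. -/
def DiagMor.IsOpen {C D : Type v} [SmallCategory C] [SmallCategory D]
    {F : C ⥤ A} {G : D ⥤ A} (m : DiagMor F G) : Prop :=
  (∀ d : D, ∃ c : C, m.Φ.obj c = d) ∧
  (∀ (c : C) (d' : D) (j : m.Φ.obj c ⟶ d'),
    ∃ (c' : C) (i : c ⟶ c') (h : m.Φ.obj c' = d'), m.Φ.map i ≫ eqToHom h = j)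

/-- The type of triples `(c, f, d)` with `f : F(c) ≅ G(d)`. -/
abbrev BisimTriple {C D : Type v} [SmallCategory C] [SmallCategory D]
    (F : C ⥤ A) (G : D ⥤ A) : Type v :=
  Σ (c : C) (d : D), F.obj c ≅ G.obj d

/-- A bisimulation between diagrams `F` and `G`. -/
def IsBisimulation {C D : Type v} [SmallCategory C] [SmallCategory D]
    (F : C ⥤ A) (G : D ⥤ A) (R : Set (BisimTriple F G)) : Prop :=
  (∀ r ∈ R, ∀ (c' : C) (i : r.1 ⟶ c'),
    ∃ (d' : D) (j : r.2.1 ⟶ d') (g : F.obj c' ≅ G.obj d'),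
      F.map i ≫ g.hom = r.2.2.hom ≫ G.map j ∧ (⟨c', d', g⟩ : BisimTriple F G) ∈ R) ∧
  (∀ r ∈ R, ∀ (d' : D) (j : r.2.1 ⟶ d'),
    ∃ (c' : C) (i : r.1 ⟶ c') (g : F.obj c' ≅ G.obj d'),
      F.map i ≫ g.hom = r.2.2.hom ≫ G.map j ∧ (⟨c', d', g⟩ : BisimTriple F G) ∈ R) ∧
  (∀ c : C, ∃ (d : D) (f : F.obj c ≅ G.obj d), (⟨c, d, f⟩ : BisimTriple F G) ∈ R) ∧
  (∀ d : D, ∃ (c : C) (f : F.obj c ≅ G.obj d), (⟨c, d, f⟩ : BisimTriple F G) ∈ R)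

/-- Two diagrams are bisimilar if there is a span of open morphisms between them. -/
def Bisimilar {C D : Type v} [SmallCategory C] [SmallCategory D]
    (F : C ⥤ A) (G : D ⥤ A) : Prop :=
  ∃ (E : Cat.{v, v}) (H : E ⥤ A) (mF : DiagMor H F) (mG : DiagMor H G),
    mF.IsOpen ∧ mG.IsOpen

/-! The relation is the image of `E` under `e ↦ (Φ e, τ_e ∘ σ_e⁻¹, Ψ e)`, and the isomorphisms
`τ_e ∘ σ_e⁻¹` are the components of the natural isomorphism `σ⁻¹ ≫ τ : Φ ⋙ F ≅ Ψ ⋙ G`. A step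
out of `Φ e` lifts along the fibration `Φ` to a step `k : e ⟶ e'` of `E`, which `Ψ` carries to the
matching step out of `Ψ e`; the required square is naturality of `σ⁻¹ ≫ τ` at `k`. Surjectivity of
`Φ` and `Ψ` on objects makes the relation total on both sides. -/

namespace CategoryTheory.Functor

def LiftsMorphisms {C : Type*} [Category C] {D : Type*} [Category D] (Φ : C ⥤ D) : Prop :=
  ∀ (c : C) (d' : D) (j : Φ.obj c ⟶ d'),
    ∃ (c' : C) (i : c ⟶ c') (h : Φ.obj c' = d'), Φ.map i ≫ eqToHom h = j

end CategoryTheory.Functor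

section SpanRelation

variable {C D E : Type v} [SmallCategory C] [SmallCategory D] [SmallCategory E]
  {F : C ⥤ A} {G : D ⥤ A} (Φ : E ⥤ C) (Ψ : E ⥤ D) (α : Φ ⋙ F ≅ Ψ ⋙ G)

def spanRelation : Set (BisimTriple F G) :=
  {r | ∃ e : E, r = ⟨Φ.obj e, Ψ.obj e, α.app e⟩}

lemma spanRelation_forth (hΦ : Φ.LiftsMorphisms) :
    ∀ r ∈ spanRelation Φ Ψ α, ∀ (c' : C) (i : r.1 ⟶ c'),
      ∃ (d' : D) (j : r.2.1 ⟶ d') (g : F.obj c' ≅ G.obj d'),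
        F.map i ≫ g.hom = r.2.2.hom ≫ G.map j ∧
          (⟨c', d', g⟩ : BisimTriple F G) ∈ spanRelation Φ Ψ α := by
  rintro _ ⟨e, rfl⟩ c' i
  obtain ⟨e', k, rfl, hk⟩ := hΦ e c' i
  rw [eqToHom_refl, Category.comp_id] at hk
  subst hk
  exact ⟨Ψ.obj e', Ψ.map k, α.app e', α.hom.naturality k, e', rfl⟩

lemma spanRelation_back (hΨ : Ψ.LiftsMorphisms) :
    ∀ r ∈ spanRelation Φ Ψ α, ∀ (d' : D) (j : r.2.1 ⟶ d'),
      ∃ (c' : C) (i : r.1 ⟶ c') (g : F.obj c' ≅ G.obj d'),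
        F.map i ≫ g.hom = r.2.2.hom ≫ G.map j ∧
          (⟨c', d', g⟩ : BisimTriple F G) ∈ spanRelation Φ Ψ α := by
  rintro _ ⟨e, rfl⟩ d' j
  obtain ⟨e', k, rfl, hk⟩ := hΨ e d' j
  rw [eqToHom_refl, Category.comp_id] at hk
  subst hk
  exact ⟨Φ.obj e', Φ.map k, α.app e', α.hom.naturality k, e', rfl⟩

theorem isBisimulation_spanRelation (hΦs : Function.Surjective Φ.obj) (hΦ : Φ.LiftsMorphisms)
    (hΨs : Function.Surjective Ψ.obj) (hΨ : Ψ.LiftsMorphisms) :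
    IsBisimulation F G (spanRelation Φ Ψ α) := by
  refine ⟨spanRelation_forth Φ Ψ α hΦ, spanRelation_back Φ Ψ α hΨ, fun c ↦ ?_, fun d ↦ ?_⟩
  · obtain ⟨e, rfl⟩ := hΦs c
    exact ⟨Ψ.obj e, α.app e, e, rfl⟩
  · obtain ⟨e, rfl⟩ := hΨs d
    exact ⟨Φ.obj e, α.app e, e, rfl⟩

end SpanRelation

/-- If there is a span of open morphisms `(Φ,σ) : H → F` and `(Ψ,τ) : H → G`,
then `R = {(Φ(e), τ_e ∘ σ_e⁻¹, Ψ(e)) | e ∈ E}` is a bisimulation between `F` and `G`. -/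
theorem stmt1 {C D E : Type v} [SmallCategory C] [SmallCategory D] [SmallCategory E]
    (F : C ⥤ A) (G : D ⥤ A) (H : E ⥤ A)
    (mF : DiagMor H F) (mG : DiagMor H G) (hF : mF.IsOpen) (hG : mG.IsOpen) :
    IsBisimulation F G
      {r : BisimTriple F G |
        ∃ e : E, r = ⟨mF.Φ.obj e, mG.Φ.obj e, (mF.σ.app e).symm ≪≫ mG.σ.app e⟩} :=
  isBisimulation_spanRelation mF.Φ mG.Φ (mF.σ.symm ≪≫ mG.σ) hF.1 hF.2 hG.1 hG.2
end

section
/- If there is a bisimulation R between two diagrams F : C → A and G : D → A, then there exists a diagram H : E → A and open morphisms (Φ,σ) : H → F and (Ψ,τ) : H → G; concretely, one may take E to be the category whose objects are elements (c,f,d) of R and whose morphisms (c,f,d) → (c',f',d') are pairs (i,j) with i : c → c' in C, j : d → d' in D and f'∘F(i) = G(j)∘f, with H(c,f,d) = F(c). -/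
open CategoryTheory

universe v u

variable {A : Type u} [Category.{v} A]

section RelCat

variable {C D : Type v} [SmallCategory C] [SmallCategory D]
  {F : C ⥤ A} {G : D ⥤ A} (R : Set (BisimTriple F G))

/-- The category `E` whose objects are the elements `(c,f,d)` of `R` and whose morphisms
`(c,f,d) → (c',f',d')` are pairs `(i,j)` with `i : c ⟶ c'`, `j : d ⟶ d'` and
`f' ∘ F(i) = G(j) ∘ f`. -/
instance relCat : SmallCategory ↥R where
  Hom r r' :=
    { p : (r.val.1 ⟶ r'.val.1) × (r.val.2.1 ⟶ r'.val.2.1) //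
        F.map p.1 ≫ r'.val.2.2.hom = r.val.2.2.hom ≫ G.map p.2 }
  id r := ⟨(𝟙 _, 𝟙 _), by simp⟩
  comp p q := ⟨(p.val.1 ≫ q.val.1, p.val.2 ≫ q.val.2), by
    simp [Functor.map_comp, Category.assoc, q.property, reassoc_of% p.property]⟩
  id_comp := fun f => Subtype.ext (Prod.ext (by simp) (by simp))
  comp_id := fun f => Subtype.ext (Prod.ext (by simp) (by simp))
  assoc := fun f g h => Subtype.ext (Prod.ext (by simp) (by simp))

/-- The tip `H : E ⥤ A` of the span, with `H(c,f,d) = F(c)` and `H(i,j) = F(i)`. -/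
def relDiag : ↥R ⥤ A where
  obj r := F.obj r.val.1
  map p := F.map p.val.1
  map_id := fun r => by show F.map (𝟙 _) = _; simp
  map_comp := fun p q => by show F.map (p.val.1 ≫ q.val.1) = _; simp

end RelCat

/-! The span is formed by the two projections out of the category of elements of `R`, with
`σ` the identity on the left and the isomorphisms `f` of the triples on the right. A lift of
`i : c ⟶ c'` along the left projection is exactly what forward lifting provides, together with
the commuting square that makes `(i, j)` a morphism of `↥R`; backward lifting does the same
on the right, and the surjectivity conditions give surjectivity on objects. -/

section Span

variable {C D : Type v} [SmallCategory C] [SmallCategory D]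
  {F : C ⥤ A} {G : D ⥤ A} (R : Set (BisimTriple F G))

def relProjLeft : ↥R ⥤ C where
  obj r := r.val.1
  map p := p.val.1

def relProjRight : ↥R ⥤ D where
  obj r := r.val.2.1
  map p := p.val.2

def relDiagMorLeft : DiagMor (relDiag R) F where
  Φ := relProjLeft R
  σ := NatIso.ofComponents (fun _ => Iso.refl _) (fun _ => by simp [relDiag, relProjLeft])

def relDiagMorRight : DiagMor (relDiag R) G where
  Φ := relProjRight R
  σ := NatIso.ofComponents (fun r => r.val.2.2) (fun p => p.property)

variable {R}

theorem relDiagMorLeft_isOpen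
    (hforth : ∀ r ∈ R, ∀ (c' : C) (i : r.1 ⟶ c'),
      ∃ (d' : D) (j : r.2.1 ⟶ d') (g : F.obj c' ≅ G.obj d'),
        F.map i ≫ g.hom = r.2.2.hom ≫ G.map j ∧ (⟨c', d', g⟩ : BisimTriple F G) ∈ R)
    (hleft : ∀ c : C, ∃ (d : D) (f : F.obj c ≅ G.obj d), (⟨c, d, f⟩ : BisimTriple F G) ∈ R) :
    (relDiagMorLeft R).IsOpen := by
  constructor
  · intro c
    obtain ⟨d, f, hf⟩ := hleft c
    exact ⟨⟨⟨c, d, f⟩, hf⟩, rfl⟩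
  · rintro ⟨r, hr⟩ c' i
    obtain ⟨d', j, g, hsquare, hmem⟩ := hforth r hr c' i
    exact ⟨⟨⟨c', d', g⟩, hmem⟩, ⟨(i, j), hsquare⟩, rfl, Category.comp_id _⟩

theorem relDiagMorRight_isOpen
    (hback : ∀ r ∈ R, ∀ (d' : D) (j : r.2.1 ⟶ d'),
      ∃ (c' : C) (i : r.1 ⟶ c') (g : F.obj c' ≅ G.obj d'),
        F.map i ≫ g.hom = r.2.2.hom ≫ G.map j ∧ (⟨c', d', g⟩ : BisimTriple F G) ∈ R)
    (hright : ∀ d : D, ∃ (c : C) (f : F.obj c ≅ G.obj d), (⟨c, d, f⟩ : BisimTriple F G) ∈ R) :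
    (relDiagMorRight R).IsOpen := by
  constructor
  · intro d
    obtain ⟨c, f, hf⟩ := hright d
    exact ⟨⟨⟨c, d, f⟩, hf⟩, rfl⟩
  · rintro ⟨r, hr⟩ d' j
    obtain ⟨c', i, g, hsquare, hmem⟩ := hback r hr d' j
    exact ⟨⟨⟨c', d', g⟩, hmem⟩, ⟨(i, j), hsquare⟩, rfl, Category.comp_id _⟩

end Span

theorem bisimilar_of_isOpen {C D E : Type v} [SmallCategory C] [SmallCategory D]
    [SmallCategory E] {F : C ⥤ A} {G : D ⥤ A} {H : E ⥤ A} (mF : DiagMor H F)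
    (mG : DiagMor H G) (hF : mF.IsOpen) (hG : mG.IsOpen) : Bisimilar F G :=
  ⟨Cat.of E, H, mF, mG, hF, hG⟩

/-- If there is a bisimulation `R` between diagrams `F` and `G`, then there is a
span of open morphisms between them; concretely, one may take as tip the diagram
`relDiag R : E ⥤ A` where `E` is the category of elements of `R`. -/
theorem stmt2 {C D : Type v} [SmallCategory C] [SmallCategory D]
    (F : C ⥤ A) (G : D ⥤ A) (R : Set (BisimTriple F G)) (hR : IsBisimulation F G R) :
    (∃ (mF : DiagMor (relDiag R) F) (mG : DiagMor (relDiag R) G), mF.IsOpen ∧ mG.IsOpen) ∧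
    Bisimilar F G := by
  obtain ⟨hforth, hback, hleft, hright⟩ := hR
  have hF := relDiagMorLeft_isOpen hforth hleft
  have hG := relDiagMorRight_isOpen hback hright
  exact ⟨⟨_, _, hF, hG⟩, bisimilar_of_isOpen _ _ hF hG⟩
end

section
/- Two diagrams F : C → A and G : D → A are bisimilar (connected by a span of open morphisms of diagrams) if and only if there exists a bisimulation between them. -/
open CategoryTheory

universe v u

variable {A : Type u} [Category.{v} A]

/-!
An open span `F ← H → G` yields the bisimulation of triples `(Φ_F e, σ_G e ∘ σ_F e⁻¹, Φ_G e)`: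
the fibration property of each leg lifts morphisms out of `Φ_F e` (resp. `Φ_G e`) to morphisms
out of `e`, and naturality of `σ_G ∘ σ_F⁻¹` makes the resulting squares commute. Conversely, a
bisimulation `R` is the tip of a span: the category of its triples, with commuting squares as
morphisms, projects onto `C` and `D`, and the lifting and covering conditions on `R` say exactly
that both projections are open.
-/

namespace DiagMor

variable {E C D : Type v} [SmallCategory E] [SmallCategory C] [SmallCategory D]
  {H : E ⥤ A} {F : C ⥤ A} {G : D ⥤ A}

def spanIso (mF : DiagMor H F) (mG : DiagMor H G) : mF.Φ ⋙ F ≅ mG.Φ ⋙ G :=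
  mF.σ.symm ≪≫ mG.σ

def spanRel (mF : DiagMor H F) (mG : DiagMor H G) : Set (BisimTriple F G) :=
  Set.range fun e => ⟨mF.Φ.obj e, mG.Φ.obj e, (spanIso mF mG).app e⟩

theorem isBisimulation_spanRel (mF : DiagMor H F) (mG : DiagMor H G)
    (hF : mF.IsOpen) (hG : mG.IsOpen) :
    IsBisimulation F G (spanRel mF mG) := by
  refine ⟨?liftLeft, ?liftRight, fun c => ?_, fun d => ?_⟩
  case liftLeft =>
    rintro _ ⟨e, rfl⟩ c' i
    obtain ⟨e', k, rfl, rfl⟩ := hF.2 e c' i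
    exact ⟨_, mG.Φ.map k, _, by simpa using (spanIso mF mG).hom.naturality k, e', rfl⟩
  case liftRight =>
    rintro _ ⟨e, rfl⟩ d' j
    obtain ⟨e', k, rfl, rfl⟩ := hG.2 e d' j
    exact ⟨_, mF.Φ.map k, _, by simpa using (spanIso mF mG).hom.naturality k, e', rfl⟩
  · obtain ⟨e, rfl⟩ := hF.1 c
    exact ⟨_, _, e, rfl⟩
  · obtain ⟨e, rfl⟩ := hG.1 d
    exact ⟨_, _, e, rfl⟩

end DiagMor

section BisimCat

variable {C D : Type v} [SmallCategory C] [SmallCategory D] {F : C ⥤ A} {G : D ⥤ A}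

def BisimCat (R : Set (BisimTriple F G)) : Type v := R

namespace BisimCat

variable {R : Set (BisimTriple F G)}

structure Hom (r s : BisimCat R) : Type v where
  i : r.1.1 ⟶ s.1.1
  j : r.1.2.1 ⟶ s.1.2.1
  sq : F.map i ≫ s.1.2.2.hom = r.1.2.2.hom ≫ G.map j

instance : Category.{v} (BisimCat R) where
  Hom := Hom
  id r := ⟨𝟙 _, 𝟙 _, by simp⟩
  comp f g := ⟨f.i ≫ g.i, f.j ≫ g.j, by
    simp only [Functor.map_comp, Category.assoc, g.sq, reassoc_of% f.sq]⟩

variable (R)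

def fst : BisimCat R ⥤ C where
  obj r := r.1.1
  map f := f.i

def snd : BisimCat R ⥤ D where
  obj r := r.1.2.1
  map f := f.j

def toLeft : DiagMor (fst R ⋙ F) F := ⟨fst R, Iso.refl _⟩

def toRight : DiagMor (fst R ⋙ F) G :=
  ⟨snd R, NatIso.ofComponents (fun r => r.1.2.2) fun f => f.sq⟩

end BisimCat

namespace IsBisimulation

variable {R : Set (BisimTriple F G)}

theorem isOpen_toLeft (hR : IsBisimulation F G R) : (BisimCat.toLeft R).IsOpen := by
  refine ⟨fun c => ?_, fun r c' i => ?_⟩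
  · obtain ⟨d, f, hf⟩ := hR.2.2.1 c
    exact ⟨⟨⟨c, d, f⟩, hf⟩, rfl⟩
  · obtain ⟨d', j, g, sq, mem⟩ := hR.1 r.1 r.2 c' i
    exact ⟨⟨⟨c', d', g⟩, mem⟩, ⟨i, j, sq⟩, rfl, Category.comp_id _⟩

theorem isOpen_toRight (hR : IsBisimulation F G R) : (BisimCat.toRight R).IsOpen := by
  refine ⟨fun d => ?_, fun r d' j => ?_⟩
  · obtain ⟨c, f, hf⟩ := hR.2.2.2 d
    exact ⟨⟨⟨c, d, f⟩, hf⟩, rfl⟩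
  · obtain ⟨c', i, g, sq, mem⟩ := hR.2.1 r.1 r.2 d' j
    exact ⟨⟨⟨c', d', g⟩, mem⟩, ⟨i, j, sq⟩, rfl, Category.comp_id _⟩

theorem bisimilar (hR : IsBisimulation F G R) : Bisimilar F G :=
  ⟨Cat.of (BisimCat R), _, _, _, hR.isOpen_toLeft, hR.isOpen_toRight⟩

end IsBisimulation

end BisimCat

/-- Two diagrams `F : C ⥤ A` and `G : D ⥤ A` are bisimilar (connected by a span
of open morphisms of diagrams) if and only if there exists a bisimulation between them. -/
theorem stmt3 {C D : Type v} [SmallCategory C] [SmallCategory D]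
    (F : C ⥤ A) (G : D ⥤ A) :
    Bisimilar F G ↔ ∃ R : Set (BisimTriple F G), IsBisimulation F G R := by
  constructor
  · rintro ⟨E, H, mF, mG, hF, hG⟩
    exact ⟨_, DiagMor.isBisimulation_spanRel mF mG hF hG⟩
  · rintro ⟨R, hR⟩
    exact hR.bisimilar
end

section
/- If (Φ,σ) : F → G is an open morphism of diagrams, then for every object c of the domain of F and every object formula S of the diagrammatic path logic, F,c ⊨ S if and only if G,Φ(c) ⊨ S; consequently F and G are logically equivalent. -/
open CategoryTheory

universe v u

variable {A : Type u} [Category.{v} A]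

/-- Morphism formulae of the diagrammatic path logic, located at an object `x` of `A`:
`⟨g⟩P` for `g : x ⟶ x'`, `?S` (where the object formula `S` is necessarily of the form
`[y]Q`), negation, and arbitrary conjunctions. -/
inductive MorForm (A : Type u) [Category.{v} A] : A → Type (max u (v + 1))
  | dia : ∀ {x x' : A}, (x ⟶ x') → MorForm A x' → MorForm A x
  | query : ∀ {x : A} (y : A), MorForm A y → MorForm A x
  | neg : ∀ {x : A}, MorForm A x → MorForm A x
  | conj : ∀ {x : A} {I : Type v}, (I → MorForm A x) → MorForm A x

/-- Object formulae `[x]P` of the diagrammatic path logic. -/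
structure ObjForm (A : Type u) [Category.{v} A] : Type (max u (v + 1)) where
  x : A
  P : MorForm A x

/-- Satisfaction `F, f, c ⊨ P` for a morphism formula `P` located at `x`,
where `f : F(c) ≅ x`. -/
def morSat {C : Type v} [SmallCategory C] (F : C ⥤ A) :
    (c : C) → (x : A) → (F.obj c ≅ x) → MorForm A x → Prop
  | c, _, f, MorForm.dia (x' := x') g P =>
      ∃ (c' : C) (i : c ⟶ c') (h : F.obj c' ≅ x'),
        F.map i ≫ h.hom = f.hom ≫ g ∧ morSat F c' x' h P
  | c, _, _, MorForm.query y P => ∃ h : F.obj c ≅ y, morSat F c y h P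
  | c, x, f, MorForm.neg P => ¬ morSat F c x f P
  | c, x, f, MorForm.conj P => ∀ i, morSat F c x f (P i)

/-- Satisfaction `F, c ⊨ [x]P` for object formulae. -/
def objSat {C : Type v} [SmallCategory C] (F : C ⥤ A) (c : C) (S : ObjForm A) : Prop :=
  ∃ f : F.obj c ≅ S.x, morSat F c S.x f S.P

/-- `F` is logically simulated by `G`. -/
def LogSim {C D : Type v} [SmallCategory C] [SmallCategory D]
    (F : C ⥤ A) (G : D ⥤ A) : Prop :=
  ∀ c : C, ∃ d : D, ∀ S : ObjForm A, objSat F c S ↔ objSat G d S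

/-- `F` and `G` are logically equivalent. -/
def LogEquiv {C D : Type v} [SmallCategory C] [SmallCategory D]
    (F : C ⥤ A) (G : D ⥤ A) : Prop :=
  LogSim F G ∧ LogSim G F

/-!
Both halves of an open morphism preserve satisfaction, by induction on formulae. Along the
natural isomorphism `σ : F ≅ Φ ⋙ G` the witnessing isomorphisms `F(c) ≅ x` are transported by
composing with `σ_c`, naturality keeping the `⟨g⟩`-squares commutative. For `Φ ⋙ G` versus `G`
the witnesses are literally the same, except that a `⟨g⟩`-step from `Φ(c)` in `D` must be lifted
to a step from `c` in `C`, which is exactly the fibration property of `Φ`. Surjectivity of `Φ` on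
objects then gives logical equivalence.
-/

def CategoryTheory.Functor.LiftsMorphisms_s6 {C D : Type v} [SmallCategory C] [SmallCategory D]
    (Φ : C ⥤ D) : Prop :=
  ∀ (c : C) (d' : D) (j : Φ.obj c ⟶ d'),
    ∃ (c' : C) (i : c ⟶ c') (h : Φ.obj c' = d'), Φ.map i ≫ eqToHom h = j

section Invariance

variable {C D : Type v} [SmallCategory C] [SmallCategory D]

theorem morSat_iff_of_iso {F F' : C ⥤ A} (σ : F ≅ F') {x : A} (P : MorForm A x) :
    ∀ (c : C) (f : F.obj c ≅ x) (f' : F'.obj c ≅ x), f = σ.app c ≪≫ f' →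
      (morSat F c x f P ↔ morSat F' c x f' P) := by
  induction P with
  | @dia x x' g P ih =>
    rintro c f f' rfl
    constructor
    · rintro ⟨c', i, h, hcomm, hP⟩
      refine ⟨c', i, (σ.app c').symm ≪≫ h, ?_, (ih c' h _ (by simp)).mp hP⟩
      simp [hcomm]
    · rintro ⟨c', i, h', hcomm, hP⟩
      refine ⟨c', i, σ.app c' ≪≫ h', ?_, (ih c' _ h' rfl).mpr hP⟩
      simp [hcomm]
  | @query x y P ih =>
    rintro c - - -
    constructor
    · rintro ⟨h, hP⟩
      exact ⟨(σ.app c).symm ≪≫ h, (ih c h _ (by simp)).mp hP⟩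
    · rintro ⟨h', hP⟩
      exact ⟨σ.app c ≪≫ h', (ih c _ h' rfl).mpr hP⟩
  | neg P ih =>
    intro c f f' hf
    exact not_congr (ih c f f' hf)
  | conj P ih =>
    intro c f f' hf
    exact forall_congr' fun k => ih k c f f' hf

theorem objSat_iff_of_iso {F F' : C ⥤ A} (σ : F ≅ F') (c : C) (S : ObjForm A) :
    objSat F c S ↔ objSat F' c S := by
  constructor
  · rintro ⟨f, hP⟩
    exact ⟨(σ.app c).symm ≪≫ f, (morSat_iff_of_iso σ S.P c f _ (by simp)).mp hP⟩
  · rintro ⟨f', hP⟩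
    exact ⟨σ.app c ≪≫ f', (morSat_iff_of_iso σ S.P c _ f' rfl).mpr hP⟩

theorem morSat_comp_iff {Φ : C ⥤ D} (hΦ : Φ.LiftsMorphisms_s6) (G : D ⥤ A) {x : A}
    (P : MorForm A x) :
    ∀ (c : C) (f : G.obj (Φ.obj c) ≅ x), morSat (Φ ⋙ G) c x f P ↔ morSat G (Φ.obj c) x f P := by
  induction P with
  | @dia x x' g P ih =>
    intro c f
    constructor
    · rintro ⟨c', i, h, hcomm, hP⟩
      exact ⟨Φ.obj c', Φ.map i, h, hcomm, (ih c' h).mp hP⟩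
    · rintro ⟨d', j, h, hcomm, hP⟩
      obtain ⟨c', i, rfl, rfl⟩ := hΦ c d' j
      simp only [eqToHom_refl, Category.comp_id] at hcomm
      exact ⟨c', i, h, hcomm, (ih c' h).mpr hP⟩
  | @query x y P ih =>
    intro c _
    exact exists_congr fun h => ih c h
  | neg P ih =>
    intro c f
    exact not_congr (ih c f)
  | conj P ih =>
    intro c f
    exact forall_congr' fun k => ih k c f

theorem objSat_comp_iff {Φ : C ⥤ D} (hΦ : Φ.LiftsMorphisms_s6) (G : D ⥤ A) (c : C)
    (S : ObjForm A) : objSat (Φ ⋙ G) c S ↔ objSat G (Φ.obj c) S :=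
  exists_congr fun f => morSat_comp_iff hΦ G S.P c f

end Invariance

/-- if `(Φ,σ) : F → G` is an open morphism of diagrams, then every object `c`
satisfies exactly the same object formulae as `Φ(c)`; consequently `F` and `G` are logically
equivalent. -/
theorem stmt6 {C D : Type v} [SmallCategory C] [SmallCategory D]
    {F : C ⥤ A} {G : D ⥤ A} (m : DiagMor F G) (hm : m.IsOpen) :
    (∀ (c : C) (S : ObjForm A), objSat F c S ↔ objSat G (m.Φ.obj c) S) ∧
    LogEquiv F G := by
  obtain ⟨hsurj, hlift⟩ := hm
  have hsat (c : C) (S : ObjForm A) : objSat F c S ↔ objSat G (m.Φ.obj c) S :=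
    (objSat_iff_of_iso m.σ c S).trans (objSat_comp_iff hlift G c S)
  refine ⟨hsat, fun c => ⟨m.Φ.obj c, hsat c⟩, fun d => ?_⟩
  obtain ⟨c, rfl⟩ := hsurj d
  exact ⟨c, fun S => (hsat c S).symm⟩
end

section
/- If two diagrams F and G are logically equivalent for the diagrammatic path logic, then the relation R consisting of all triples (c,f,d) such that c and d satisfy the same object formulae, f : F(c) → G(d) is an isomorphism, and f factors as h₂⁻¹∘h₁ for isomorphisms h₁, h₂ with F,h₁,c and G,h₂,d satisfying the same morphism formulae, is a bisimulation between F and G. -/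
open CategoryTheory

universe v u

variable {A : Type u} [Category.{v} A]

/-!
A Hennessy–Milner argument, made possible by infinitary conjunctions. Suppose a pointed
object `F, f, c` has no partner among a family of candidates `G, g_k, d_k` satisfying the
same morphism formulae. Then each candidate is refuted by some formula `P_k` true at
`F, f, c` (negate a distinguishing formula if necessary), and the single conjunction `⋀ₖ P_k`
refutes them all. Given `h₁ : F c ≅ x` and `h₂ : G d ≅ x` with the same morphism formulae
and a transition `i : c ⟶ c'`, take as candidates the transitions out of `d` matching `i`:
otherwise `⟨h₁⁻¹ ≫ F i⟩ ⋀ₖ P_k` would hold at `F, h₁, c` but not at `G, h₂, d`.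
-/

section PathLogic

variable {C D : Type v} [SmallCategory C] [SmallCategory D] {F : C ⥤ A} {G : D ⥤ A}

theorem morSat_conj {c : C} {x : A} {f : F.obj c ≅ x} {I : Type v} {P : I → MorForm A x} :
    morSat F c x f (.conj P) ↔ ∀ i, morSat F c x f (P i) := Iff.rfl

variable (F G) in
def MorEquiv (c : C) (d : D) {x : A} (f : F.obj c ≅ x) (g : G.obj d ≅ x) : Prop :=
  ∀ P : MorForm A x, morSat F c x f P ↔ morSat G d x g P

namespace MorEquiv

variable {c : C} {d : D} {x : A} {f : F.obj c ≅ x} {g : G.obj d ≅ x}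

theorem symm (h : MorEquiv F G c d f g) : MorEquiv G F d c g f :=
  fun P => (h P).symm

theorem objSat_iff (h : MorEquiv F G c d f g) (S : ObjForm A) :
    objSat F c S ↔ objSat G d S :=
  h (.query S.x S.P)

theorem exists_morSat_not_morSat (h : ¬ MorEquiv F G c d f g) :
    ∃ P : MorForm A x, morSat F c x f P ∧ ¬ morSat G d x g P := by
  obtain ⟨P, hP⟩ := not_forall.1 h
  by_cases hF : morSat F c x f P
  · exact ⟨P, hF, fun hG => hP (iff_of_true hF hG)⟩
  · exact ⟨.neg P, hF, fun hG => hP (iff_of_false hF hG)⟩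

end MorEquiv

theorem exists_morEquiv_of_forall_conj {c : C} {x : A} {f : F.obj c ≅ x} {K : Type v}
    (d : K → D) (g : ∀ k, G.obj (d k) ≅ x)
    (hsat : ∀ P : K → MorForm A x, (∀ k, morSat F c x f (P k)) →
      ∃ k, morSat G (d k) x (g k) (P k)) :
    ∃ k, MorEquiv F G c (d k) f (g k) := by
  by_contra! hne
  choose P hP using fun k => MorEquiv.exists_morSat_not_morSat (hne k)
  obtain ⟨k, hk⟩ := hsat P fun k => (hP k).1
  exact (hP k).2 hk

theorem MorEquiv.exists_lift {c c' : C} {d : D} {x : A} {f : F.obj c ≅ x} {g : G.obj d ≅ x}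
    (h : MorEquiv F G c d f g) (i : c ⟶ c') :
    ∃ (d' : D) (j : d ⟶ d') (k : G.obj d' ≅ F.obj c'),
      G.map j ≫ k.hom = g.hom ≫ f.inv ≫ F.map i ∧
      MorEquiv F G c' d' (Iso.refl _) k := by
  let K := {p : Σ d' : D, (d ⟶ d') × (G.obj d' ≅ F.obj c') //
    G.map p.2.1 ≫ p.2.2.hom = g.hom ≫ f.inv ≫ F.map i}
  suffices ∃ k : K, MorEquiv F G c' k.1.1 (Iso.refl _) k.1.2.2 by
    obtain ⟨⟨⟨d', j, k⟩, hsq⟩, hk⟩ := this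
    exact ⟨d', j, k, hsq, hk⟩
  refine exists_morEquiv_of_forall_conj _ _ fun P hP => ?_
  have hF : morSat F c x f (.dia (f.inv ≫ F.map i) (.conj P)) :=
    ⟨c', i, Iso.refl _, by simp, morSat_conj.2 hP⟩
  obtain ⟨d', j, k, hsq, hall⟩ := (h _).1 hF
  exact ⟨⟨⟨d', j, k⟩, hsq⟩, morSat_conj.1 hall _⟩

theorem LogSim.exists_morEquiv (h : LogSim F G) (c : C) :
    ∃ (d : D) (k : G.obj d ≅ F.obj c), MorEquiv F G c d (Iso.refl _) k := by
  obtain ⟨d, hd⟩ := h c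
  obtain ⟨k, hk⟩ := exists_morEquiv_of_forall_conj (K := G.obj d ≅ F.obj c) (fun _ => d) id
    fun P hP => (hd ⟨F.obj c, .conj P⟩).1 ⟨Iso.refl _, morSat_conj.2 hP⟩ |>.imp
      fun k hk => morSat_conj.1 hk k
  exact ⟨d, k, hk⟩

variable (F G) in
def logEquivRel : Set (BisimTriple F G) :=
  {r | (∀ S : ObjForm A, objSat F r.1 S ↔ objSat G r.2.1 S) ∧
    ∃ (x : A) (h₁ : F.obj r.1 ≅ x) (h₂ : G.obj r.2.1 ≅ x),
      r.2.2 = h₁ ≪≫ h₂.symm ∧ MorEquiv F G r.1 r.2.1 h₁ h₂}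

theorem MorEquiv.mem_logEquivRel {c : C} {d : D} {x : A} {h₁ : F.obj c ≅ x}
    {h₂ : G.obj d ≅ x} (h : MorEquiv F G c d h₁ h₂) :
    ⟨c, d, h₁ ≪≫ h₂.symm⟩ ∈ logEquivRel F G :=
  ⟨h.objSat_iff, x, h₁, h₂, rfl, h⟩

end PathLogic

/-- if `F` and `G` are logically equivalent, then the relation consisting of all
triples `(c, f, d)` such that `c` and `d` satisfy the same object formulae and `f` factors as
`h₂⁻¹ ∘ h₁` for isomorphisms `h₁ : F(c) ≅ x`, `h₂ : G(d) ≅ x` with `F,h₁,c` and `G,h₂,d`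
satisfying the same morphism formulae, is a bisimulation between `F` and `G`. -/
theorem stmt7 {C D : Type v} [SmallCategory C] [SmallCategory D]
    (F : C ⥤ A) (G : D ⥤ A) (h : LogEquiv F G) :
    IsBisimulation F G
      {r : BisimTriple F G |
        (∀ S : ObjForm A, objSat F r.1 S ↔ objSat G r.2.1 S) ∧
        ∃ (x : A) (h₁ : F.obj r.1 ≅ x) (h₂ : G.obj r.2.1 ≅ x),
          r.2.2 = h₁ ≪≫ h₂.symm ∧
          ∀ P : MorForm A x, morSat F r.1 x h₁ P ↔ morSat G r.2.1 x h₂ P} := by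
  change IsBisimulation F G (logEquivRel F G)
  refine ⟨?_, ?_, fun c => ?_, fun d => ?_⟩
  · rintro r ⟨-, x, h₁, h₂, hr, hmor⟩ c' i
    obtain ⟨d', j, k, hsq, hk⟩ := hmor.exists_lift i
    refine ⟨d', j, Iso.refl _ ≪≫ k.symm, ?_, hk.mem_logEquivRel⟩
    simp [hr, Iso.comp_inv_eq, hsq]
  · rintro r ⟨-, x, h₁, h₂, hr, hmor⟩ d' j
    obtain ⟨c', i, k, hsq, hk⟩ := hmor.symm.exists_lift j
    refine ⟨c', i, k ≪≫ (Iso.refl _).symm, ?_, hk.symm.mem_logEquivRel⟩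
    simp [hr, hsq]
  · obtain ⟨d, k, hk⟩ := h.1.exists_morEquiv c
    exact ⟨d, _, hk.mem_logEquivRel⟩
  · obtain ⟨c, k, hk⟩ := h.2.exists_morEquiv d
    exact ⟨c, _, hk.symm.mem_logEquivRel⟩
end

section
/- Let a formula of the existential theory of invertible matrices be given: natural numbers n₁,…,n_k, and finitely many predicates of the form A_j · X_{i_j} = X_{l_j} · B_j where A_j, B_j are rational matrices of size n_{l_j} × n_{i_j}. Then there exist invertible real matrices M₁,…,M_k (M_i of size n_i × n_i) satisfying all the predicates if and only if there exist invertible rational matrices satisfying all the predicates. -/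
/-!
The real solutions of the linear system `A_j X_{i_j} = X_{l_j} B_j` form the real span of the
rational solutions: the span is contained in the real kernel, and has the same dimension because
rational linear independence and the rank of a rational matrix survive the extension to `ℝ`.
Rational points are therefore dense in the real solution space, and invertibility of all `X_s`
is an open condition, so a real invertible solution can be approximated by a rational one that is
still invertible.
-/

open Module Submodule

lemma exists_linearIndependent_fin_span_eq {K V : Type*} [Field K] [AddCommGroup V] [Module K V]
    (W : Submodule K V) [FiniteDimensional K W] :
    ∃ (d : ℕ) (v : Fin d → V), LinearIndependent K v ∧ span K (Set.range v) = W := by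
  let b := finBasis K W
  refine ⟨_, W.subtype ∘ b, b.linearIndependent.map' _ W.ker_subtype, ?_⟩
  rw [Set.range_comp, span_image, b.span_eq, map_subtype_top]

section RationalPoints

variable {ι : Type*}

noncomputable abbrev ratCastPi (ι : Type*) : (ι → ℚ) →ₗ[ℚ] (ι → ℝ) :=
  (Algebra.linearMap ℚ ℝ).compLeft ι

lemma span_image_ratCastPi_span (s : Set (ι → ℚ)) :
    span ℝ (ratCastPi ι '' span ℚ s) = span ℝ (ratCastPi ι '' s) := by
  rw [← map_coe, map_span]
  exact span_span_of_tower (R := ℚ) (S := ℝ) (M := ι → ℝ) _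

lemma finrank_span_image_ratCastPi [Finite ι] (W : Submodule ℚ (ι → ℚ)) :
    finrank ℝ (span ℝ (ratCastPi ι '' W)) = finrank ℚ W := by
  obtain ⟨d, v, hv, hW⟩ := exists_linearIndependent_fin_span_eq W
  have hv' : LinearIndependent ℝ (ratCastPi ι ∘ v) :=
    linearIndependent_algebraMap_comp_iff (S := ℝ) (v := v) |>.mpr hv
  have hspan : span ℝ (ratCastPi ι '' W) = span ℝ (Set.range (ratCastPi ι ∘ v)) := by
    rw [← hW, span_image_ratCastPi_span, Set.range_comp]
  rw [hspan, finrank_span_eq_card hv', ← finrank_span_eq_card hv, hW]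

lemma span_range_ratCastPi_subset_closure {κ : Type*} [Fintype κ] (v : κ → ι → ℚ) :
    (span ℝ (Set.range (ratCastPi ι ∘ v)) : Set (ι → ℝ)) ⊆
      closure (ratCastPi ι '' span ℚ (Set.range v)) := by
  rw [← Fintype.range_linearCombination]
  have hdense : DenseRange (Pi.map fun _ : κ => ((↑) : ℚ → ℝ)) :=
    DenseRange.piMap fun _ => Rat.denseRange_cast
  refine ((LinearMap.continuous_of_finiteDimensional _).range_subset_closure_image_dense
    hdense).trans (closure_mono ?_)
  rintro _ ⟨_, ⟨q, rfl⟩, rfl⟩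
  refine ⟨Fintype.linearCombination ℚ v q, ?_, ?_⟩
  · rw [← Fintype.range_linearCombination]; exact ⟨q, rfl⟩
  · ext a; simp [Fintype.linearCombination_apply]

lemma ker_subset_closure_image_ker [Fintype ι] {κ : Type*} [Finite κ]
    (T : (ι → ℚ) →ₗ[ℚ] (κ → ℚ)) (T' : (ι → ℝ) →ₗ[ℝ] (κ → ℝ))
    (hT : ∀ x, T' (ratCastPi ι x) = ratCastPi κ (T x)) :
    (LinearMap.ker T' : Set (ι → ℝ)) ⊆ closure (ratCastPi ι '' LinearMap.ker T) := by
  have hker : span ℝ (ratCastPi ι '' LinearMap.ker T) ≤ LinearMap.ker T' := by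
    rw [span_le]
    rintro _ ⟨x, hx, rfl⟩
    simp_all
  have hrange : span ℝ (ratCastPi κ '' LinearMap.range T) ≤ LinearMap.range T' := by
    rw [span_le]
    rintro _ ⟨_, ⟨x, rfl⟩, rfl⟩
    exact ⟨_, hT x⟩
  have hdim := finrank_mono hrange
  rw [finrank_span_image_ratCastPi] at hdim
  have hnullity := T.finrank_range_add_finrank_ker
  have hnullity' := T'.finrank_range_add_finrank_ker
  rw [finrank_fintype_fun_eq_card] at hnullity hnullity'
  have hspan : span ℝ (ratCastPi ι '' LinearMap.ker T) = LinearMap.ker T' :=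
    eq_of_le_of_finrank_le hker (by rw [finrank_span_image_ratCastPi]; omega)
  obtain ⟨d, v, -, hv⟩ := exists_linearIndependent_fin_span_eq (LinearMap.ker T)
  rw [← hspan, ← hv, span_image_ratCastPi_span, ← Set.range_comp]
  exact span_range_ratCastPi_subset_closure v

end RationalPoints

lemma Matrix.isUnit_map_iff {K L : Type*} [Field K] [Field L] (f : K →+* L) {n : Type*}
    [Fintype n] [DecidableEq n] (M : Matrix n n K) : IsUnit (M.map f) ↔ IsUnit M := by
  rw [Matrix.isUnit_iff_isUnit_det, Matrix.isUnit_iff_isUnit_det, ← f.mapMatrix_apply,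
    ← f.map_det, isUnit_iff_ne_zero, isUnit_iff_ne_zero, map_ne_zero]

section MatrixSystem

variable {k : ℕ} {n : Fin k → ℕ} {m : ℕ} {i l : Fin m → Fin k}

abbrev BlockIndex (n : Fin k → ℕ) : Type := Σ s : Fin k, Fin (n s) × Fin (n s)

def unflatten {R : Type*} (x : BlockIndex n → R) (s : Fin k) :
    Matrix (Fin (n s)) (Fin (n s)) R :=
  Matrix.of fun a b => x ⟨s, a, b⟩

section
variable {R : Type*} [CommRing R]

@[simp] lemma unflatten_add (x y : BlockIndex n → R) (s : Fin k) :
    unflatten (x + y) s = unflatten x s + unflatten y s := rfl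

@[simp] lemma unflatten_smul (r : R) (x : BlockIndex n → R) (s : Fin k) :
    unflatten (r • x) s = r • unflatten x s := rfl

variable (R) in
def systemMap (A B : ∀ j : Fin m, Matrix (Fin (n (l j))) (Fin (n (i j))) R) :
    (BlockIndex n → R) →ₗ[R] ((Σ j : Fin m, Fin (n (l j)) × Fin (n (i j))) → R) where
  toFun x p := (A p.1 * unflatten x (i p.1) - unflatten x (l p.1) * B p.1) p.2.1 p.2.2
  map_add' x y := by
    funext p
    simp [Matrix.mul_add, Matrix.add_mul, sub_add_sub_comm]
  map_smul' r x := by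
    funext p
    simp [Matrix.mul_smul, Matrix.smul_mul, mul_sub]

lemma systemMap_eq_zero_iff (A B : ∀ j : Fin m, Matrix (Fin (n (l j))) (Fin (n (i j))) R)
    (x : BlockIndex n → R) :
    systemMap R A B x = 0 ↔ ∀ j, A j * unflatten x (i j) = unflatten x (l j) * B j := by
  simp only [funext_iff, systemMap, LinearMap.coe_mk, AddHom.coe_mk, Pi.zero_apply,
    Sigma.forall, Prod.forall, Matrix.sub_apply, sub_eq_zero]
  exact forall_congr' fun j => Matrix.ext_iff

end

lemma systemMap_ratCast (A B : ∀ j : Fin m, Matrix (Fin (n (l j))) (Fin (n (i j))) ℚ)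
    (x : BlockIndex n → ℚ) :
    systemMap ℝ (fun j => (A j).map (↑)) (fun j => (B j).map (↑)) (ratCastPi _ x) =
      ratCastPi _ (systemMap ℚ A B x) := by
  funext p
  simp [systemMap, unflatten, Matrix.mul_apply]

lemma isOpen_setOf_forall_isUnit_unflatten {R : Type*} [Field R] [TopologicalSpace R]
    [IsTopologicalRing R] [T1Space R] :
    IsOpen {x : BlockIndex n → R | ∀ s, IsUnit (unflatten x s)} := by
  simp only [Set.ofPred_forall, Matrix.isUnit_iff_isUnit_det, isUnit_iff_ne_zero]
  refine isOpen_iInter_of_finite fun s => isOpen_ne_fun ?_ continuous_const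
  unfold unflatten
  fun_prop

end MatrixSystem

/-- a formula of the existential theory of invertible matrices, given by sizes
`n 0, …, n (k-1)` and finitely many predicates `A_j · X_{i j} = X_{l j} · B_j` with rational
matrices `A_j, B_j` of size `n (l j) × n (i j)`, is satisfiable by invertible real matrices
if and only if it is satisfiable by invertible rational matrices. -/
theorem stmt13 (k : ℕ) (n : Fin k → ℕ) (m : ℕ) (i l : Fin m → Fin k)
    (A : ∀ j : Fin m, Matrix (Fin (n (l j))) (Fin (n (i j))) ℚ)
    (B : ∀ j : Fin m, Matrix (Fin (n (l j))) (Fin (n (i j))) ℚ) :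
    (∃ M : ∀ s : Fin k, Matrix (Fin (n s)) (Fin (n s)) ℝ,
      (∀ s, IsUnit (M s)) ∧
        ∀ j, (A j).map ((↑) : ℚ → ℝ) * M (i j) = M (l j) * (B j).map ((↑) : ℚ → ℝ)) ↔
    (∃ M : ∀ s : Fin k, Matrix (Fin (n s)) (Fin (n s)) ℚ,
      (∀ s, IsUnit (M s)) ∧ ∀ j, A j * M (i j) = M (l j) * B j) := by
  constructor
  · rintro ⟨M, hM, hMA⟩
    have hy : (fun p => M p.1 p.2.1 p.2.2) ∈ LinearMap.ker (systemMap ℝ _ _) :=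
      (systemMap_eq_zero_iff _ _ _).mpr hMA
    obtain ⟨_, hxU, x, hx, rfl⟩ := mem_closure_iff.mp
      (ker_subset_closure_image_ker _ _ (systemMap_ratCast A B) hy) _
      isOpen_setOf_forall_isUnit_unflatten hM
    exact ⟨unflatten x, fun s => (Matrix.isUnit_map_iff (Rat.castHom ℝ) _).mp (hxU s),
      (systemMap_eq_zero_iff _ _ _).mp hx⟩
  · rintro ⟨M, hM, hMA⟩
    refine ⟨fun s => (M s).map (↑),
      fun s => (Matrix.isUnit_map_iff (Rat.castHom ℝ) _).mpr (hM s), fun j => ?_⟩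
    have := congrArg (Matrix.map · (Rat.castHom ℝ)) (hMA j)
    simp only [Matrix.map_mul] at this
    exact this
end

section
/- If f : T → S is an open morphism of transition systems over alphabet L (in the sense of Joyal–Nielsen–Winskel), then the induced morphism Π(f) : Π(T) → Π(S) between the associated diagrams of runs is an open morphism of diagrams; consequently, if T and S are bisimilar transition systems then Π(T) and Π(S) are bisimilar diagrams. -/
open CategoryTheory

/-- A transition system over the alphabet `L`, with a set of states, an initial state
and a labelled transition relation. -/
structure TS (L : Type) where
  S : Type
  init : S
  tr : S → L → S → Prop

variable {L : Type}

/-- Validity of a sequence of steps `(a₁,s₁)(a₂,s₂)…` starting from a given state. -/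
def TS.ValidFrom (T : TS L) : T.S → List (L × T.S) → Prop
  | _, [] => True
  | s, (a, t) :: r => T.tr s a t ∧ T.ValidFrom t r

/-- A (finite) run of `T` from its initial state. -/
def Run (T : TS L) : Type := {r : List (L × T.S) // T.ValidFrom T.init r}

/-- Runs are ordered by prefix. -/
instance (T : TS L) : PartialOrder (Run T) where
  le r r' := r.val <+: r'.val
  le_refl _ := List.prefix_refl _
  le_trans _ _ _ h h' := List.IsPrefix.trans h h'
  le_antisymm _ _ h h' := Subtype.ext (List.IsPrefix.eq_of_length h (Nat.le_antisymm h.length_le h'.length_le))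

/-- Words over `L`, ordered by the prefix relation (the poset `A_L`). -/
def Word (L : Type) : Type := List L

instance : PartialOrder (Word L) where
  le w w' := List.IsPrefix w w'
  le_refl _ := List.prefix_refl _
  le_trans _ _ _ h h' := List.IsPrefix.trans h h'
  le_antisymm _ _ h h' := List.IsPrefix.eq_of_length h (Nat.le_antisymm h.length_le h'.length_le)

/-- The label word of a run. -/
def runLabels {T : TS L} (r : Run T) : Word L := r.val.map Prod.fst

lemma runLabels_monotone (T : TS L) : Monotone (runLabels (T := T)) := by
  intro r r' h
  obtain ⟨t, ht⟩ : r.val <+: r'.val := h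
  exact ⟨t.map Prod.fst, by simp only [runLabels, ← List.map_append, ht]⟩

/-- The diagram `F_T : C_T ⥤ A_L` of a transition system `T`: the functor from the poset of
runs of `T` to the poset of words mapping a run to its label word, i.e. `Π(T)`. -/
def runDiag (T : TS L) : Run T ⥤ Word L := (runLabels_monotone T).functor

/-- A morphism of transition systems. -/
@[ext] structure TSHom (T U : TS L) : Type where
  f : T.S → U.S
  hinit : f T.init = U.init
  htr : ∀ s a t, T.tr s a t → U.tr (f s) a (f t)

instance : Category (TS L) where
  Hom := TSHom
  id T := ⟨id, rfl, fun _ _ _ h => h⟩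
  comp φ ψ := ⟨ψ.f ∘ φ.f, by simp [φ.hinit, ψ.hinit], fun s a t h => ψ.htr _ _ _ (φ.htr _ _ _ h)⟩
  id_comp _ := rfl
  comp_id _ := rfl
  assoc _ _ _ := rfl

lemma TSHom.validFrom_map {T U : TS L} (φ : TSHom T U) :
    ∀ (l : List (L × T.S)) (s : T.S), T.ValidFrom s l →
      U.ValidFrom (φ.f s) (l.map (fun p => (p.1, φ.f p.2)))
  | [], _, _ => trivial
  | (_, t) :: l, _, h => ⟨φ.htr _ _ _ h.1, φ.validFrom_map l t h.2⟩

/-- The image of a run under a morphism of transition systems. -/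
def TSHom.runMap {T U : TS L} (φ : TSHom T U) (r : Run T) : Run U :=
  ⟨r.val.map (fun p => (p.1, φ.f p.2)), φ.hinit ▸ φ.validFrom_map r.val T.init r.property⟩

lemma TSHom.runMap_monotone {T U : TS L} (φ : TSHom T U) : Monotone φ.runMap := by
  intro r r' h
  obtain ⟨t, ht⟩ : r.val <+: r'.val := h
  exact ⟨t.map (fun p => (p.1, φ.f p.2)), by simp only [TSHom.runMap, ← List.map_append, ht]⟩

open CategoryTheory

universe v u

variable {A : Type u} [Category.{v} A]

/-- A morphism of transition systems is open (in the sense of Joyal–Nielsen–Winskel) if it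
satisfies the path-lifting property: whenever the image of a run of `T` extends to a longer
run of `U`, the extension lifts to `T`. -/
def TSOpen {T U : TS L} (φ : TSHom T U) : Prop :=
  ∀ (r : Run T) (r' : Run U), φ.runMap r ≤ r' →
    ∃ r'' : Run T, r ≤ r'' ∧ φ.runMap r'' = r'

/-- Two transition systems are bisimilar if there is a span of open morphisms between them. -/
def TSBisimilar (T U : TS L) : Prop :=
  ∃ (V : TS L) (φ : TSHom V T) (ψ : TSHom V U), TSOpen φ ∧ TSOpen ψ

/-- The morphism of diagrams `Π(φ) : Π(T) → Π(U)` induced by a morphism of transition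
systems `φ : T → U`. -/
def PiMap {T U : TS L} (φ : TSHom T U) : DiagMor (runDiag T) (runDiag U) :=
  ⟨φ.runMap_monotone.functor,
    eqToIso (CategoryTheory.Functor.ext (F := runDiag T) (G := φ.runMap_monotone.functor ⋙ runDiag U)
      (fun r => show runLabels r = runLabels (φ.runMap r) by
        simp [runLabels, TSHom.runMap, List.map_map, Function.comp_def]; rfl))⟩

/-! Between posets every hom-set is a subsingleton, so the fibration condition of an open
morphism of diagrams is exactly the path-lifting property of its object map; the empty run,
the bottom of the run poset, makes an open morphism of transition systems surjective on runs. -/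

lemma DiagMor.isOpen_of_surjective_of_lift {C D : Type v} [Preorder C] [Preorder D]
    {F : C ⥤ A} {G : D ⥤ A} (m : DiagMor F G) (hsurj : Function.Surjective m.Φ.obj)
    (hlift : ∀ (c : C) (d' : D), m.Φ.obj c ≤ d' → ∃ c', c ≤ c' ∧ m.Φ.obj c' = d') :
    m.IsOpen := by
  refine ⟨hsurj, fun c d' j => ?_⟩
  obtain ⟨c', hcc', rfl⟩ := hlift c d' (leOfHom j)
  exact ⟨c', homOfLE hcc', rfl, Subsingleton.elim _ _⟩

lemma TSOpen.surjective_runMap {T U : TS L} {φ : TSHom T U} (hφ : TSOpen φ) :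
    Function.Surjective φ.runMap := fun r' =>
  let ⟨r, _, hr⟩ := hφ ⟨[], trivial⟩ r' List.nil_prefix
  ⟨r, hr⟩

lemma TSOpen.piMap_isOpen {T U : TS L} {φ : TSHom T U} (hφ : TSOpen φ) : (PiMap φ).IsOpen :=
  (PiMap φ).isOpen_of_surjective_of_lift hφ.surjective_runMap hφ

lemma TSBisimilar.bisimilar_runDiag {T U : TS L} (h : TSBisimilar T U) :
    Bisimilar (runDiag T) (runDiag U) :=
  let ⟨V, φ, ψ, hφ, hψ⟩ := h
  ⟨Cat.of (Run V), runDiag V, PiMap φ, PiMap ψ, hφ.piMap_isOpen, hψ.piMap_isOpen⟩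

/-- if `φ : T → U` is an open morphism of transition systems, then the induced
morphism `Π(φ) : Π(T) → Π(U)` is an open morphism of diagrams; consequently, if `T` and `U`
are bisimilar transition systems then the diagrams `Π(T)` and `Π(U)` are bisimilar. -/
theorem stmt18 (L : Type) (T U : TS L) :
    (∀ φ : TSHom T U, TSOpen φ → (PiMap φ).IsOpen) ∧
    (TSBisimilar T U → Bisimilar (runDiag T) (runDiag U)) :=
  ⟨fun _ hφ => hφ.piMap_isOpen, TSBisimilar.bisimilar_runDiag⟩
end

section
/- For transition systems T and S over an alphabet L, the diagrams Π(T) and Π(S) are bisimilar if and only if T and S are strongly bisimilar as transition systems. -/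
open CategoryTheory

variable {L : Type}

open CategoryTheory

universe v u

variable {A : Type u} [Category.{v} A]

/-- Strong bisimilarity of transition systems: a relation on states containing the pair of
initial states such that transitions with the same label can be matched on both sides. -/
def StrongBisim (T U : TS L) : Prop :=
  ∃ R : T.S → U.S → Prop,
    R T.init U.init ∧
    (∀ s u, R s u → ∀ a t, T.tr s a t → ∃ t', U.tr u a t' ∧ R t t') ∧
    (∀ s u, R s u → ∀ a t', U.tr u a t' → ∃ t, T.tr s a t ∧ R t t')

/-!
Isomorphisms in the poset `A_L` are equalities, so a triple of a diagram bisimulation is just a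
pair of runs with the same label word, and lifting along `c ≤ c'` means extending runs by steps
with the same labels. A strong bisimulation `R` therefore yields the diagram bisimulation of all
pairs of runs whose last states are `R`-related, extensions being transported step by step along
`R`. Conversely, the last states of the pairs of runs of a diagram bisimulation form a strong
bisimulation: extending one run by a single transition forces its partner to be extended by a
single transition with the same label.
-/

variable {T U : TS L}

namespace TS

def lastState (T : TS L) (s : T.S) (l : List (L × T.S)) : T.S :=
  l.foldl (fun _ p => p.2) s

lemma lastState_append (s : T.S) (l m : List (L × T.S)) :
    T.lastState s (l ++ m) = T.lastState (T.lastState s l) m :=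
  List.foldl_append

lemma validFrom_append :
    ∀ (s : T.S) (l m : List (L × T.S)),
      T.ValidFrom s (l ++ m) ↔ T.ValidFrom s l ∧ T.ValidFrom (T.lastState s l) m
  | _, [], _ => by simp [TS.ValidFrom, lastState]
  | s, (a, t) :: l, m => by
      change T.tr s a t ∧ T.ValidFrom t (l ++ m) ↔
        (T.tr s a t ∧ T.ValidFrom t l) ∧ T.ValidFrom (T.lastState t l) m
      rw [validFrom_append t l m, and_assoc]

def IsSimulation (R : T.S → U.S → Prop) : Prop :=
  ∀ s u, R s u → ∀ a t, T.tr s a t → ∃ t', U.tr u a t' ∧ R t t'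

lemma IsSimulation.exists_validFrom {R : T.S → U.S → Prop} (hR : IsSimulation R) :
    ∀ (m : List (L × T.S)) (s : T.S) (u : U.S), R s u → T.ValidFrom s m →
      ∃ m' : List (L × U.S), U.ValidFrom u m' ∧ m.map Prod.fst = m'.map Prod.fst ∧
        R (T.lastState s m) (U.lastState u m')
  | [], _, _, hsu, _ => ⟨[], trivial, rfl, hsu⟩
  | (a, t) :: m, s, u, hsu, ⟨hst, hm⟩ => by
      obtain ⟨t', hut', htt'⟩ := hR s u hsu a t hst
      obtain ⟨m', hm', hlab, hlast⟩ := hR.exists_validFrom m t t' htt' hm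
      exact ⟨(a, t') :: m', ⟨hut', hm'⟩, by simp [hlab], hlast⟩

end TS

namespace Run

def last (r : Run T) : T.S := T.lastState T.init r.val

def labels (r : Run T) : List L := r.val.map Prod.fst

def nil (T : TS L) : Run T := ⟨[], trivial⟩

def append (r : Run T) (m : List (L × T.S)) (hm : T.ValidFrom r.last m) : Run T :=
  ⟨r.val ++ m, (T.validFrom_append _ _ _).mpr ⟨r.property, hm⟩⟩

lemma nil_le (r : Run T) : nil T ≤ r := List.nil_prefix

lemma le_append (r : Run T) (m : List (L × T.S)) (hm : T.ValidFrom r.last m) :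
    r ≤ r.append m hm :=
  List.prefix_append _ _

lemma last_append (r : Run T) (m : List (L × T.S)) (hm : T.ValidFrom r.last m) :
    (r.append m hm).last = T.lastState r.last m :=
  T.lastState_append _ _ _

lemma labels_append (r : Run T) (m : List (L × T.S)) (hm : T.ValidFrom r.last m) :
    (r.append m hm).labels = r.labels ++ m.map Prod.fst :=
  List.map_append

lemma exists_eq_append_of_le {r r' : Run T} (h : r ≤ r') :
    ∃ m hm, r' = r.append m hm := by
  obtain ⟨m, hm⟩ : r.val <+: r'.val := h
  have hvalid := r'.property
  rw [← hm, T.validFrom_append] at hvalid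
  exact ⟨m, hvalid.2, Subtype.ext hm.symm⟩

lemma eq_nil_of_labels_eq_nil {r : Run T} (h : r.labels = []) : r = nil T :=
  Subtype.ext (List.map_eq_nil_iff.mp h)

lemma labels_eq_of_iso {c : Run T} {d : Run U}
    (g : (runDiag T).obj c ≅ (runDiag U).obj d) : c.labels = d.labels :=
  le_antisymm (α := Word L) (leOfHom g.hom) (leOfHom g.inv)

lemma tr_last_of_le {r r' : Run T} {a : L} (h : r ≤ r')
    (hlab : r'.labels = r.labels ++ [a]) : T.tr r.last a r'.last := by
  obtain ⟨m, hm, rfl⟩ := exists_eq_append_of_le h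
  rw [labels_append, List.append_cancel_left_eq, List.map_eq_singleton_iff] at hlab
  obtain ⟨⟨_, t⟩, rfl, rfl⟩ := hlab
  rw [last_append]
  exact hm.1

end Run

lemma TS.IsSimulation.exists_run_le {R : T.S → U.S → Prop} (hR : T.IsSimulation R)
    {c c' : Run T} {d : Run U} (hlab : c.labels = d.labels) (hcd : R c.last d.last)
    (h : c ≤ c') : ∃ d', d ≤ d' ∧ c'.labels = d'.labels ∧ R c'.last d'.last := by
  obtain ⟨m, hm, rfl⟩ := Run.exists_eq_append_of_le h
  obtain ⟨m', hm', hlab', hlast⟩ := hR.exists_validFrom m _ _ hcd hm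
  refine ⟨d.append m' hm', d.le_append m' hm', ?_, ?_⟩
  · rw [Run.labels_append, Run.labels_append, hlab, hlab']
  · rwa [Run.last_append, Run.last_append]

theorem isBisimulation_runDiag_of_isSimulation {R : T.S → U.S → Prop}
    (hinit : R T.init U.init) (hforth : T.IsSimulation R) (hback : U.IsSimulation (flip R)) :
    IsBisimulation (runDiag T) (runDiag U) {x | R x.1.last x.2.1.last} := by
  refine ⟨?_, ?_, fun c => ?_, fun d => ?_⟩
  · rintro ⟨c, d, g⟩ hcd c' i
    obtain ⟨d', hdd', hlab, hR⟩ :=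
      hforth.exists_run_le (Run.labels_eq_of_iso g) hcd (leOfHom i)
    exact ⟨d', homOfLE hdd', eqToIso hlab, Subsingleton.elim _ _, hR⟩
  · rintro ⟨c, d, g⟩ hcd d' j
    obtain ⟨c', hcc', hlab, hR⟩ :=
      hback.exists_run_le (Run.labels_eq_of_iso g).symm hcd (leOfHom j)
    exact ⟨c', homOfLE hcc', eqToIso hlab.symm, Subsingleton.elim _ _, hR⟩
  · obtain ⟨d, -, hlab, hR⟩ :=
      hforth.exists_run_le (c := Run.nil T) (d := Run.nil U) rfl hinit (Run.nil_le c)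
    exact ⟨d, eqToIso hlab, hR⟩
  · obtain ⟨c, -, hlab, hR⟩ :=
      hback.exists_run_le (c := Run.nil U) (d := Run.nil T) rfl hinit (Run.nil_le d)
    exact ⟨c, eqToIso hlab.symm, hR⟩

lemma exists_matching_tr_of_forth {Q : Run T → Run U → Prop}
    (hlab : ∀ c d, Q c d → c.labels = d.labels)
    (hforth : ∀ c d, Q c d → ∀ c', c ≤ c' → ∃ d', d ≤ d' ∧ Q c' d')
    {c : Run T} {d : Run U} (hcd : Q c d) {a : L} {t : T.S} (ht : T.tr c.last a t) :
    ∃ c' d', Q c' d' ∧ c'.last = t ∧ U.tr d.last a d'.last := by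
  obtain ⟨d', hdd', hQ⟩ :=
    hforth c d hcd (c.append [(a, t)] ⟨ht, trivial⟩) (c.le_append _ _)
  refine ⟨_, d', hQ, c.last_append _ _, Run.tr_last_of_le hdd' ?_⟩
  rw [← hlab _ _ hQ, ← hlab _ _ hcd]
  exact c.labels_append _ _

theorem strongBisim_of_runRel {Q : Run T → Run U → Prop}
    (hlab : ∀ c d, Q c d → c.labels = d.labels)
    (hforth : ∀ c d, Q c d → ∀ c', c ≤ c' → ∃ d', d ≤ d' ∧ Q c' d')
    (hback : ∀ c d, Q c d → ∀ d', d ≤ d' → ∃ c', c ≤ c' ∧ Q c' d')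
    (hnil : ∃ d, Q (Run.nil T) d) : StrongBisim T U := by
  obtain ⟨d, hd⟩ := hnil
  obtain rfl : d = Run.nil U := Run.eq_nil_of_labels_eq_nil (hlab _ _ hd).symm
  refine ⟨fun s u => ∃ c d, Q c d ∧ c.last = s ∧ d.last = u,
    ⟨_, _, hd, rfl, rfl⟩, ?_, ?_⟩
  · rintro _ _ ⟨c, d, hcd, rfl, rfl⟩ a t ht
    obtain ⟨c', d', hQ, rfl, ht'⟩ := exists_matching_tr_of_forth hlab hforth hcd ht
    exact ⟨_, ht', c', d', hQ, rfl, rfl⟩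
  · rintro _ _ ⟨c, d, hcd, rfl, rfl⟩ a t ht
    obtain ⟨d', c', hQ, rfl, ht'⟩ :=
      exists_matching_tr_of_forth (Q := flip Q) (fun d c h => (hlab c d h).symm)
        (fun d c h => hback c d h) hcd ht
    exact ⟨_, ht', c', d', hQ, rfl, rfl⟩

theorem strongBisim_of_isBisimulation {R : Set (BisimTriple (runDiag T) (runDiag U))}
    (hR : IsBisimulation (runDiag T) (runDiag U) R) : StrongBisim T U := by
  obtain ⟨hforth, hback, hcover, -⟩ := hR
  refine strongBisim_of_runRel (Q := fun c d => ∃ g, ⟨c, d, g⟩ ∈ R)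
    (fun _ _ ⟨g, _⟩ => Run.labels_eq_of_iso g) ?_ ?_ (hcover (Run.nil T))
  · rintro c d ⟨g, hg⟩ c' hcc'
    obtain ⟨d', j, g', -, hR'⟩ := hforth _ hg c' (homOfLE hcc')
    exact ⟨d', leOfHom j, g', hR'⟩
  · rintro c d ⟨g, hg⟩ d' hdd'
    obtain ⟨c', i, g', -, hR'⟩ := hback _ hg d' (homOfLE hdd')
    exact ⟨c', leOfHom i, g', hR'⟩

/-- the diagrams `Π(T)` and `Π(U)` are bisimilar if and only if the transition
systems `T` and `U` are strongly bisimilar. -/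
theorem stmt19 (L : Type) (T U : TS L) :
    (∃ R : Set (BisimTriple (runDiag T) (runDiag U)),
        IsBisimulation (runDiag T) (runDiag U) R) ↔
      StrongBisim T U :=
  ⟨fun ⟨_, hR⟩ => strongBisim_of_isBisimulation hR,
    fun ⟨_, hinit, hforth, hback⟩ =>
      ⟨_, isBisimulation_runDiag_of_isSimulation hinit hforth fun u s h => hback s u h⟩⟩
end
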